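/- For any n ≥ 1, letting N = n+1, the formula [^{M+1} w ∈ w'^N (→ w ≐ w ])^M → w'^{N+N!} ∈ w] (with M = n^{N+N!+1}) is a stratified formula, while the result of replacing w'^N by w'^{N+N!} in it (i.e. pumping the first block of primes up to N+N! primes) is not stratified. -/

import Mathlib

/-- Alphabet of the usual syntax of set theory. -/
inductive Alph : Type
  | lb | rb | imp | all | deq | mem | w | prime | bot
deriving DecidableEq

/-- Well-formed formulae of set theory; variables are naturals (number of primes). -/
inductive Fm : Type
  | bot : Fm
  | eq : ℕ → ℕ → Fm
  | mem : ℕ → ℕ → Fm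
  | imp : Fm → Fm → Fm
  | all : ℕ → Fm → Fm
deriving DecidableEq

/-- The string `w'^n` for the variable with `n` primes. -/
def varStr (n : ℕ) : List Alph := Alph.w :: List.replicate n Alph.prime

/-- The string of symbols of a formula. -/
def Fm.str : Fm → List Alph
  | .bot => [Alph.bot]
  | .eq x y => varStr x ++ [Alph.deq] ++ varStr y
  | .mem x y => varStr x ++ [Alph.mem] ++ varStr y
  | .imp φ ψ => [Alph.lb] ++ φ.str ++ [Alph.imp] ++ ψ.str ++ [Alph.rb]
  | .all x φ => [Alph.lb, Alph.all] ++ varStr x ++ [Alph.rb] ++ φ.str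

/-- Pairs `(x, y)` such that `x ∈ y` occurs as an atomic subformula. -/
def Fm.memPairs : Fm → Finset (ℕ × ℕ)
  | .bot => ∅
  | .eq _ _ => ∅
  | .mem x y => {(x, y)}
  | .imp φ ψ => φ.memPairs ∪ ψ.memPairs
  | .all _ φ => φ.memPairs

/-- Pairs `(x, y)` such that `x ≐ y` occurs as an atomic subformula. -/
def Fm.eqPairs : Fm → Finset (ℕ × ℕ)
  | .bot => ∅
  | .eq x y => {(x, y)}
  | .mem _ _ => ∅
  | .imp φ ψ => φ.eqPairs ∪ ψ.eqPairs
  | .all _ φ => φ.eqPairs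

/-- A formula is stratified if some integer assignment to variables satisfies
`σ x = σ y - 1` for subformulae `x ∈ y` and `σ x = σ y` for subformulae `x ≐ y`. -/
def Fm.Stratified (φ : Fm) : Prop :=
  ∃ σ : ℕ → ℤ, (∀ p ∈ φ.memPairs, σ p.1 = σ p.2 - 1) ∧ (∀ p ∈ φ.eqPairs, σ p.1 = σ p.2)

/-! Stratifiability only sees the atomic pairs `x ∈ y` and `x ≐ y`. Padding with `[· → w ≐ w]`
adds only the pair `w ≐ w`, which every assignment satisfies, so it can be stripped, leaving
`[w ∈ w'^a → w'^b ∈ w]`. That asks for `σ(w'^b) = σ(w) - 1 = σ(w'^a) - 2`, which is solvable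
exactly when `a`, `b` and `0` are pairwise distinct: true for `a = N`, `b = N + N!`, and false
after pumping, where `a = b`. -/

namespace Fm

def IsStratification (φ : Fm) (σ : ℕ → ℤ) : Prop :=
  (∀ p ∈ φ.memPairs, σ p.1 = σ p.2 - 1) ∧ (∀ p ∈ φ.eqPairs, σ p.1 = σ p.2)

theorem stratified_iff (φ : Fm) : φ.Stratified ↔ ∃ σ, φ.IsStratification σ := Iff.rfl

variable (σ : ℕ → ℤ)

@[simp]
theorem isStratification_mem (x y : ℕ) : (mem x y).IsStratification σ ↔ σ x = σ y - 1 := by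
  simp [IsStratification, memPairs, eqPairs]

@[simp]
theorem isStratification_eq (x y : ℕ) : (eq x y).IsStratification σ ↔ σ x = σ y := by
  simp [IsStratification, memPairs, eqPairs]

@[simp]
theorem isStratification_imp (φ ψ : Fm) :
    (imp φ ψ).IsStratification σ ↔ φ.IsStratification σ ∧ ψ.IsStratification σ := by
  simp only [IsStratification, memPairs, eqPairs, Finset.forall_mem_union]
  tauto

@[simp]
theorem isStratification_iterate_imp_eq_self (k x : ℕ) (φ : Fm) :
    ((fun ψ => imp ψ (eq x x))^[k] φ).IsStratification σ ↔ φ.IsStratification σ := by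
  induction k with
  | zero => rfl
  | succ k ih => simp [Function.iterate_succ_apply', ih]

theorem stratified_imp_iterate_imp_eq_self_iff (k x : ℕ) (φ χ : Fm) :
    (imp ((fun ψ => imp ψ (eq x x))^[k] φ) χ).Stratified ↔ (imp φ χ).Stratified := by
  simp only [stratified_iff, isStratification_imp, isStratification_iterate_imp_eq_self]

theorem stratified_imp_mem_mem_iff (x a b : ℕ) :
    (imp (mem x a) (mem b x)).Stratified ↔ a ≠ b ∧ a ≠ x ∧ b ≠ x := by
  simp only [stratified_iff, isStratification_imp, isStratification_mem]
  constructor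
  · rintro ⟨σ, hxa, hbx⟩
    refine ⟨?_, ?_, ?_⟩ <;> rintro rfl <;> omega
  · rintro ⟨hab, hax, hbx⟩
    refine ⟨fun v => if v = a then 1 else if v = x then 0 else -1, ?_, ?_⟩ <;>
      simp [hab.symm, hax.symm, hbx]

end Fm

theorem pumped_formula_not_stratified_general (n : ℕ) :
    (Fm.imp
        ((fun ψ => Fm.imp ψ (Fm.eq 0 0))^[n ^ ((n + 1) + Nat.factorial (n + 1) + 1)]
          (Fm.mem 0 (n + 1)))
        (Fm.mem ((n + 1) + Nat.factorial (n + 1)) 0)).Stratified ∧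
    ¬ (Fm.imp
        ((fun ψ => Fm.imp ψ (Fm.eq 0 0))^[n ^ ((n + 1) + Nat.factorial (n + 1) + 1)]
          (Fm.mem 0 ((n + 1) + Nat.factorial (n + 1))))
        (Fm.mem ((n + 1) + Nat.factorial (n + 1)) 0)).Stratified := by
  simp only [Fm.stratified_imp_iterate_imp_eq_self_iff, Fm.stratified_imp_mem_mem_iff]
  have := Nat.factorial_pos (n + 1)
  omega

/-- For `n ≥ 1`, with `N = n + 1` and `M = n ^ (N + N! + 1)`, the formula
`[^{M+1} w ∈ w'^N (→ w ≐ w ])^M → w'^{N+N!} ∈ w]` is stratified, while the result of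
pumping its first block of primes from `N` up to `N + N!` is not stratified. -/
theorem pumped_formula_not_stratified (n : ℕ) (hn : 1 ≤ n) :
    (Fm.imp
        ((fun ψ => Fm.imp ψ (Fm.eq 0 0))^[n ^ ((n + 1) + Nat.factorial (n + 1) + 1)]
          (Fm.mem 0 (n + 1)))
        (Fm.mem ((n + 1) + Nat.factorial (n + 1)) 0)).Stratified ∧
    ¬ (Fm.imp
        ((fun ψ => Fm.imp ψ (Fm.eq 0 0))^[n ^ ((n + 1) + Nat.factorial (n + 1) + 1)]
          (Fm.mem 0 ((n + 1) + Nat.factorial (n + 1))))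
        (Fm.mem ((n + 1) + Nat.factorial (n + 1)) 0)).Stratified :=
  pumped_formula_not_stratified_general n
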